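/- Let L be a frame, CL its congruence frame, and ∇ : L → CL the embedding a ↦ ∇_a = {(x,y) : x ∨ a = y ∨ a}. Then ∇ is an open map (has a left adjoint l : CL → L satisfying l(∇_a ∩ Θ) = a ∧ l(Θ) for all a ∈ L, Θ ∈ CL) if and only if L is Boolean. -/
import Mathlib


/-- A frame congruence: an equivalence relation compatible with binary meets
and arbitrary joins. -/
def IsFrameCongruence {L : Type*} [Order.Frame L] (θ : L → L → Prop) : Prop :=
  Equivalence θ ∧
  (∀ a b c d : L, θ a b → θ c d → θ (a ⊓ c) (b ⊓ d)) ∧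
  (∀ S : Set (L × L), (∀ p ∈ S, θ p.1 p.2) →
    θ (sSup (Prod.fst '' S)) (sSup (Prod.snd '' S)))

/-- The join of a family of congruences: the least frame congruence containing
all of them. -/
def congSup {L : Type*} [Order.Frame L] (𝒮 : Set (L → L → Prop)) : L → L → Prop :=
  fun x y => ∀ ψ : L → L → Prop, IsFrameCongruence ψ →
    (∀ θ ∈ 𝒮, ∀ a b : L, θ a b → ψ a b) → ψ x y

/-- The closed congruence `∇_a`. -/
def nabla {L : Type*} [Order.Frame L] (a : L) : L → L → Prop :=
  fun x y => x ⊔ a = y ⊔ a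

/-- The open congruence `Δ_a`. -/
def delta {L : Type*} [Order.Frame L] (a : L) : L → L → Prop :=
  fun x y => x ⊓ a = y ⊓ a

/-- Complements in a distributive lattice are unique. -/
lemma aux_compl_unique {L : Type*} [Order.Frame L] {p q r : L}
    (h1 : p ⊓ q = ⊥) (h2 : p ⊔ q = ⊤) (h3 : p ⊓ r = ⊥) (h4 : p ⊔ r = ⊤) : q = r := by
  have hq : q ≤ r := by
    calc q = q ⊓ (p ⊔ r) := by rw [h4, inf_top_eq]
    _ = (q ⊓ p) ⊔ (q ⊓ r) := inf_sup_left ..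
    _ = q ⊓ r := by rw [inf_comm q p, h1, bot_sup_eq]
    _ ≤ r := inf_le_right
  have hr : r ≤ q := by
    calc r = r ⊓ (p ⊔ q) := by rw [h2, inf_top_eq]
    _ = (r ⊓ p) ⊔ (r ⊓ q) := inf_sup_left ..
    _ = r ⊓ q := by rw [inf_comm r p, h3, bot_sup_eq]
    _ ≤ q := inf_le_right
  exact le_antisymm hq hr

lemma aux_delta_cong {L : Type*} [Order.Frame L] (a : L) :
    IsFrameCongruence (delta a) := by
  refine ⟨⟨fun _ => rfl, fun h => h.symm, fun h1 h2 => h1.trans h2⟩, ?_, ?_⟩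
  · intro u v w z h1 h2
    show (u ⊓ w) ⊓ a = (v ⊓ z) ⊓ a
    rw [inf_inf_distrib_right, h1, h2, ← inf_inf_distrib_right]
  · intro S hS
    show sSup (Prod.fst '' S) ⊓ a = sSup (Prod.snd '' S) ⊓ a
    rw [sSup_inf_eq, sSup_inf_eq, iSup_image, iSup_image]
    exact iSup_congr fun p => iSup_congr fun hp => hS p hp

lemma aux_eq_cong {L : Type*} [Order.Frame L] :
    IsFrameCongruence (Eq : L → L → Prop) := by
  refine ⟨eq_equivalence, fun a b c d h1 h2 => by rw [h1, h2], ?_⟩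
  intro S hS
  have : Prod.fst '' S = Prod.snd '' S := by
    ext x
    constructor
    · rintro ⟨p, hp, rfl⟩; exact ⟨p, hp, (hS p hp).symm⟩
    · rintro ⟨p, hp, rfl⟩; exact ⟨p, hp, hS p hp⟩
  rw [this]

theorem stmt_19 {L : Type*} [Order.Frame L] :
    (∃ l : (L → L → Prop) → L,
      (∀ θ : L → L → Prop, IsFrameCongruence θ →
        ∀ x : L, l θ ≤ x ↔ ∀ a b : L, θ a b → a ⊔ x = b ⊔ x) ∧
      (∀ (x : L) (θ : L → L → Prop), IsFrameCongruence θ →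
        l (fun a b => nabla x a b ∧ θ a b) = x ⊓ l θ)) ↔
    (∀ a : L, ∃ b : L, a ⊓ b = ⊥ ∧ a ⊔ b = ⊤) := by
  constructor
  · rintro ⟨l, hadj, hfrob⟩ a
    have hcong := aux_delta_cong (L := L) a
    have h1 := (hadj _ hcong (l (delta a))).mp le_rfl
    have hsup : a ⊔ l (delta a) = ⊤ := by
      have h := h1 a ⊤ (show a ⊓ a = ⊤ ⊓ a by simp)
      simpa using h
    have hEq : (fun u v => nabla a u v ∧ delta a u v) = (Eq : L → L → Prop) := by
      funext u v
      apply propext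
      constructor
      · rintro ⟨h1, h2⟩
        have h1' : u ⊔ a = v ⊔ a := h1
        have h2' : u ⊓ a = v ⊓ a := h2
        calc u = u ⊓ (u ⊔ a) := (inf_sup_self).symm
        _ = u ⊓ (v ⊔ a) := by rw [h1']
        _ = (u ⊓ v) ⊔ (u ⊓ a) := inf_sup_left ..
        _ = (u ⊓ v) ⊔ (v ⊓ a) := by rw [h2']
        _ = v ⊓ (u ⊔ a) := by rw [inf_comm u v, ← inf_sup_left]
        _ = v ⊓ (v ⊔ a) := by rw [h1']
        _ = v := inf_sup_self
      · rintro rfl; exact ⟨rfl, rfl⟩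
    have h2 := hfrob a (delta a) hcong
    rw [hEq] at h2
    have h3 : l (Eq : L → L → Prop) ≤ ⊥ :=
      (hadj _ aux_eq_cong ⊥).mpr (by rintro u v rfl; rfl)
    exact ⟨l (delta a), by rw [← h2]; exact le_bot_iff.mp h3, hsup⟩
  · intro hcomp
    choose c hc1 hc2 using hcomp
    set sd : L → L → L := fun a b => (a ⊓ c b) ⊔ (b ⊓ c a) with hsd
    have key : ∀ a b x : L, a ⊔ x = b ⊔ x ↔ sd a b ≤ x := by
      intro a b x
      constructor
      · intro h
        apply sup_le
        · have ha : a ≤ b ⊔ x := by rw [← h]; exact le_sup_left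
          calc a ⊓ c b ≤ (b ⊔ x) ⊓ c b := inf_le_inf_right _ ha
          _ = (b ⊓ c b) ⊔ (x ⊓ c b) := inf_sup_right ..
          _ ≤ x := by rw [hc1 b, bot_sup_eq]; exact inf_le_left
        · have hb : b ≤ a ⊔ x := by rw [h]; exact le_sup_left
          calc b ⊓ c a ≤ (a ⊔ x) ⊓ c a := inf_le_inf_right _ hb
          _ = (a ⊓ c a) ⊔ (x ⊓ c a) := inf_sup_right ..
          _ ≤ x := by rw [hc1 a, bot_sup_eq]; exact inf_le_left
      · intro h
        apply le_antisymm
        · refine sup_le ?_ le_sup_right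
          calc a = a ⊓ (b ⊔ c b) := by rw [hc2 b, inf_top_eq]
          _ = (a ⊓ b) ⊔ (a ⊓ c b) := inf_sup_left ..
          _ ≤ b ⊔ x := sup_le (inf_le_right.trans le_sup_left)
              ((le_sup_left.trans h).trans le_sup_right)
        · refine sup_le ?_ le_sup_right
          calc b = b ⊓ (a ⊔ c a) := by rw [hc2 a, inf_top_eq]
          _ = (b ⊓ a) ⊔ (b ⊓ c a) := inf_sup_left ..
          _ ≤ a ⊔ x := sup_le (inf_le_right.trans le_sup_left)
              ((le_sup_right.trans h).trans le_sup_right)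
    refine ⟨fun θ => sSup {s | ∃ a b, θ a b ∧ s = sd a b}, ?_, ?_⟩
    · intro θ hθ x
      constructor
      · intro h a b hab
        rw [key]
        refine le_trans (le_sSup ?_) h
        exact ⟨a, b, hab, rfl⟩
      · intro h
        apply sSup_le
        rintro s ⟨a, b, hab, rfl⟩
        exact (key a b x).mp (h a b hab)
    · intro x θ hθ
      apply le_antisymm
      · apply sSup_le
        rintro s ⟨a, b, ⟨hn, hab⟩, rfl⟩
        exact le_inf ((key a b x).mp hn) (le_sSup ⟨a, b, hab, rfl⟩)
      · rw [inf_sSup_eq]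
        refine iSup₂_le fun s hs => ?_
        obtain ⟨a, b, hab, rfl⟩ := hs
        -- the pair (a ⊔ c x, b ⊔ c x)
        have hθuv : θ (a ⊔ c x) (b ⊔ c x) := by
          have h := hθ.2.2 {(a, b), (c x, c x)} ?_
          · rw [Set.image_pair, Set.image_pair, sSup_pair, sSup_pair] at h
            exact h
          · rintro p hp
            rcases hp with rfl | rfl
            · exact hab
            · exact hθ.1.refl _
        have htop : ∀ t : L, (t ⊔ c x) ⊔ x = ⊤ := fun t => by
          rw [sup_assoc, sup_comm (c x) x, hc2 x, sup_top_eq]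
        have hnab : nabla x (a ⊔ c x) (b ⊔ c x) := by
          show (a ⊔ c x) ⊔ x = (b ⊔ c x) ⊔ x
          rw [htop, htop]
        have hcompl : ∀ t : L, c (t ⊔ c x) = c t ⊓ x := by
          intro t
          refine aux_compl_unique (hc1 _) (hc2 _) ?_ ?_
          · calc (t ⊔ c x) ⊓ (c t ⊓ x) = (t ⊓ (c t ⊓ x)) ⊔ (c x ⊓ (c t ⊓ x)) :=
                inf_sup_right ..
            _ = ((t ⊓ c t) ⊓ x) ⊔ ((x ⊓ c x) ⊓ c t) := by ac_rfl
            _ = ⊥ := by rw [hc1 t, hc1 x, bot_inf_eq, bot_inf_eq, sup_idem]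
          · calc (t ⊔ c x) ⊔ (c t ⊓ x) = ((t ⊔ c x) ⊔ c t) ⊓ ((t ⊔ c x) ⊔ x) :=
                sup_inf_left ..
            _ = ((t ⊔ c t) ⊔ c x) ⊓ ⊤ := by rw [htop t, sup_right_comm]
            _ = ⊤ := by rw [hc2 t, top_sup_eq, inf_top_eq]
        refine le_trans ?_ (le_sSup ⟨a ⊔ c x, b ⊔ c x, ⟨hnab, hθuv⟩, rfl⟩)
        show x ⊓ ((a ⊓ c b) ⊔ (b ⊓ c a)) ≤
          ((a ⊔ c x) ⊓ c (b ⊔ c x)) ⊔ ((b ⊔ c x) ⊓ c (a ⊔ c x))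
        rw [hcompl, hcompl, inf_sup_left]
        apply sup_le
        · refine le_trans ?_ le_sup_left
          exact le_inf ((inf_le_right.trans inf_le_left).trans le_sup_left)
            (le_inf (inf_le_right.trans inf_le_right) inf_le_left)
        · refine le_trans ?_ le_sup_right
          exact le_inf ((inf_le_right.trans inf_le_left).trans le_sup_left)
            (le_inf (inf_le_right.trans inf_le_right) inf_le_left)
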